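/- arXiv:1801.10306 — 4 statements merged into one kernel-verified Lean document; each statement's English description precedes it below -/
import Mathlib

section
/- Let $A$ be a doubly stochastic matrix of order $n$ (an $n \times n$ real matrix with nonnegative entries whose every row sum and every column sum equals $1$), with $n \geq 1$. Then the permanent of $A$ is strictly greater than zero. -/
/-!
By Birkhoff's theorem a doubly stochastic matrix is a convex combination `∑ w σ • P_σ` of
permutation matrices. Some weight `w σ` is positive, and every entry `A i (σ i)` is at least
`w σ`, so the `σ`-term of the permanent is positive while all other terms are nonnegative.
-/

open Finset Equiv

/-- The permanent of an `n × n` real matrix. -/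
def matPerm {n : ℕ} (A : Fin n → Fin n → ℝ) : ℝ :=
  ∑ σ : Equiv.Perm (Fin n), ∏ i : Fin n, A i (σ i)

section DoublyStochastic

variable {R n : Type*} [Fintype n] [DecidableEq n]

lemma le_sum_smul_permMatrix_apply [Semiring R] [PartialOrder R] [IsOrderedAddMonoid R]
    {w : Perm n → R} (hw : ∀ τ, 0 ≤ w τ) (σ : Perm n) (i : n) :
    w σ ≤ (∑ τ, w τ • τ.permMatrix R) i (σ i) := by
  simp only [Matrix.sum_apply, Matrix.smul_apply, PEquiv.toMatrix_apply, toPEquiv_apply,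
    Option.mem_def, Option.some.injEq, smul_eq_mul, mul_ite, mul_one, mul_zero]
  simpa using single_le_sum (f := fun τ : Perm n => if τ i = σ i then w τ else 0)
    (fun τ _ => ite_nonneg (hw τ) le_rfl) (mem_univ σ)

lemma exists_perm_forall_pos_of_mem_doublyStochastic [Field R] [LinearOrder R]
    [IsStrictOrderedRing R] {M : Matrix n n R} (hM : M ∈ doublyStochastic R n) :
    ∃ σ : Perm n, ∀ i, 0 < M i (σ i) := by
  obtain ⟨w, hw_nonneg, hw_sum, rfl⟩ := exists_eq_sum_perm_of_mem_doublyStochastic hM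
  obtain ⟨σ, -, hσ⟩ : ∃ σ ∈ univ, (0 : R) < w σ :=
    exists_lt_of_sum_lt (by simp [hw_sum])
  exact ⟨σ, fun i => hσ.trans_le (le_sum_smul_permMatrix_apply hw_nonneg σ i)⟩

end DoublyStochastic

lemma matPerm_pos_of_forall_pos {n : ℕ} {A : Fin n → Fin n → ℝ} (hA : ∀ i j, 0 ≤ A i j)
    (σ : Perm (Fin n)) (hσ : ∀ i, 0 < A i (σ i)) : 0 < matPerm A :=
  (prod_pos fun i _ => hσ i).trans_le <|
    single_le_sum (f := fun τ : Perm (Fin n) => ∏ i, A i (τ i))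
      (fun _ _ => prod_nonneg fun _ _ => hA _ _) (mem_univ σ)

theorem doubly_stochastic_perm_pos_general (n : ℕ)
    (A : Fin n → Fin n → ℝ)
    (hnonneg : ∀ i j, 0 ≤ A i j)
    (hrow : ∀ i, ∑ j, A i j = 1)
    (hcol : ∀ j, ∑ i, A i j = 1) :
    0 < matPerm A := by
  have hA : Matrix.of A ∈ doublyStochastic ℝ (Fin n) :=
    mem_doublyStochastic_iff_sum.2 ⟨hnonneg, hrow, hcol⟩
  obtain ⟨σ, hσ⟩ := exists_perm_forall_pos_of_mem_doublyStochastic hA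
  exact matPerm_pos_of_forall_pos hnonneg σ hσ

/-- The permanent of every doubly stochastic matrix of order `n ≥ 1` is positive. -/
theorem doubly_stochastic_perm_pos (n : ℕ) (hn : 1 ≤ n)
    (A : Fin n → Fin n → ℝ)
    (hnonneg : ∀ i j, 0 ≤ A i j)
    (hrow : ∀ i, ∑ j, A i j = 1)
    (hcol : ∀ j, ∑ i, A i j = 1) :
    0 < matPerm A :=
  doubly_stochastic_perm_pos_general n A hnonneg hrow hcol
end

section
/- Up to equivalence, the $4 \times 3$ row-latin rectangle $T$ with rows $(1,2,3)$, $(1,2,3)$, $(2,3,1)$, $(2,3,1)$ (i.e., $T(i,j) = j$ for $i \in \{0,1\}$ and $T(i,j) = j+1 \bmod 3$ for $i \in \{2,3\}$, with symbols in $\mathrm{Fin}\,3$) is the unique $4 \times 3$ row-latin rectangle with no transversals: every $4 \times 3$ row-latin rectangle that has no transversal is equivalent to $T$. -/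
/-- A `4 × 3` row-latin rectangle: each row is a bijection of `Fin 3`. -/
def RowLatin (R : Fin 4 → Fin 3 → Fin 3) : Prop :=
  ∀ i, Function.Bijective (R i)

/-- A transversal of a `4 × 3` rectangle: three entries hitting each row, each
column and each symbol at most once. -/
def HasTransversal (R : Fin 4 → Fin 3 → Fin 3) : Prop :=
  ∃ (ρ : Fin 3 → Fin 4) (c : Equiv.Perm (Fin 3)),
    Function.Injective ρ ∧ Function.Injective (fun k => R (ρ k) (c k))

/-- Equivalence of `4 × 3` rectangles by row, column and symbol permutations. -/
def RectEquiv (R R' : Fin 4 → Fin 3 → Fin 3) : Prop :=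
  ∃ (π : Equiv.Perm (Fin 4)) (c : Equiv.Perm (Fin 3)) (s : Equiv.Perm (Fin 3)),
    ∀ i j, R' i j = s (R (π i) (c j))

/-- The rectangle with rows `(1,2,3), (1,2,3), (2,3,1), (2,3,1)`
(with symbols written as `0,1,2` in `Fin 3`). -/
def T : Fin 4 → Fin 3 → Fin 3 :=
  ![![0, 1, 2], ![0, 1, 2], ![1, 2, 0], ![1, 2, 0]]

/-!
Write the rows of a row-latin rectangle as permutations of `Fin 3`. Three pairwise distinct
rows always carry a transversal, and so do rows `f, f, g` as soon as `f x = g x` for some `x`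
(use the cells `(f, y), (f, z), (g, x)` with `{x, y, z} = Fin 3`). Hence, without a
transversal, every three rows contain a repeated one but never a repeated one together with
a row agreeing with it somewhere. The four rows are therefore `f, f, g, g` up to order, with
`f⁻¹ * g` a derangement, i.e. a `3`-cycle; conjugating it to `j ↦ j + 1` yields `T`.
-/

open Equiv Function

theorem Equiv.Perm.exists_injective_of_pairwise_ne :
    ∀ σ₁ σ₂ σ₃ : Perm (Fin 3), σ₁ ≠ σ₂ → σ₂ ≠ σ₃ → σ₁ ≠ σ₃ →
      ∃ c : Perm (Fin 3), Injective ![σ₁ (c 0), σ₂ (c 1), σ₃ (c 2)] := by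
  decide

theorem Equiv.Perm.exists_conj_eq_addOne_of_forall_ne :
    ∀ τ : Perm (Fin 3), (∀ x, τ x ≠ x) → ∃ c : Perm (Fin 3), ∀ j, τ (c j) = c (j + 1) := by
  decide

theorem Fin.exists_perm_apply_eq_and_apply_eq {α : Type*} (r : Fin 4 → α)
    (hpair : ∀ i j k, i ≠ j → j ≠ k → i ≠ k → r i = r j ∨ r j = r k ∨ r i = r k)
    (hsep : ∀ i j k, i ≠ j → j ≠ k → i ≠ k → r i = r j → r i ≠ r k) :
    ∃ π : Perm (Fin 4), r (π 0) = r (π 1) ∧ r (π 2) = r (π 3) := by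
  obtain ⟨j, hj, h0j⟩ : ∃ j ≠ 0, r 0 = r j := by
    rcases hpair 0 1 2 (by decide) (by decide) (by decide) with h01 | h12 | h02
    · exact ⟨1, by decide, h01⟩
    · rcases hpair 0 1 3 (by decide) (by decide) (by decide) with h01 | h13 | h03
      · exact ⟨1, by decide, h01⟩
      · exact (hsep 1 2 3 (by decide) (by decide) (by decide) h12 h13).elim
      · exact ⟨3, by decide, h03⟩
    · exact ⟨2, by decide, h02⟩
  set π := swap 1 j
  have hπ0 : π 0 = 0 := swap_apply_of_ne_of_ne (by decide) hj.symm
  have hπ {a b : Fin 4} (hab : a ≠ b) : π a ≠ π b := π.injective.ne hab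
  have h01 : r (π 0) = r (π 1) := by simpa [hπ0, π] using h0j
  refine ⟨π, h01, ?_⟩
  rcases hpair (π 1) (π 2) (π 3) (hπ (by decide)) (hπ (by decide))
    (hπ (by decide)) with h12 | h23 | h13
  · exact (hsep _ _ (π 2) (hπ (by decide)) (hπ (by decide)) (hπ (by decide))
      h01 (h01.trans h12)).elim
  · exact h23
  · exact (hsep _ _ (π 3) (hπ (by decide)) (hπ (by decide)) (hπ (by decide))
      h01 (h01.trans h13)).elim

section Transversal

variable {R : Fin 4 → Fin 3 → Fin 3} {i j k : Fin 4}

theorem hasTransversal_of_injective (hij : i ≠ j) (hjk : j ≠ k) (hik : i ≠ k)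
    (c : Perm (Fin 3)) (hc : Injective ![R i (c 0), R j (c 1), R k (c 2)]) :
    HasTransversal R := by
  refine ⟨![i, j, k], c, ?_, ?_⟩
  · intro a b
    fin_cases a <;> fin_cases b <;> simp_all [eq_comm]
  · convert hc using 1
    funext t
    fin_cases t <;> rfl

theorem RowLatin.hasTransversal_of_pairwise_ne (hR : RowLatin R) (hij : i ≠ j) (hjk : j ≠ k)
    (hik : i ≠ k) (hRij : R i ≠ R j) (hRjk : R j ≠ R k) (hRik : R i ≠ R k) :
    HasTransversal R := by
  have hrow (a b : Fin 4) (h : R a ≠ R b) : ofBijective _ (hR a) ≠ ofBijective _ (hR b) :=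
    fun he => h (funext fun x => congrArg (· x) he)
  obtain ⟨c, hc⟩ := Perm.exists_injective_of_pairwise_ne _ _ _
    (hrow i j hRij) (hrow j k hRjk) (hrow i k hRik)
  exact hasTransversal_of_injective hij hjk hik c hc

theorem RowLatin.hasTransversal_of_eq_of_apply_eq (hR : RowLatin R) (hij : i ≠ j)
    (hjk : j ≠ k) (hik : i ≠ k) (hRij : R i = R j) {x : Fin 3} (hx : R i x = R k x) :
    HasTransversal R := by
  refine hasTransversal_of_injective hij hjk hik (swap x 2) ?_
  convert (hR i).injective.comp (swap x 2).injective using 1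
  funext t
  fin_cases t <;> simp [hRij, ← hx]

theorem RowLatin.rectEquiv_T_of_apply_eq (hR : RowLatin R) (π : Perm (Fin 4))
    (h01 : R (π 0) = R (π 1)) (h23 : R (π 2) = R (π 3)) (hne : ∀ x, R (π 0) x ≠ R (π 2) x) :
    RectEquiv R T := by
  set σ : Perm (Fin 3) := ofBijective _ (hR (π 0))
  set τ : Perm (Fin 3) := ofBijective _ (hR (π 2))
  obtain ⟨c, hc⟩ := Perm.exists_conj_eq_addOne_of_forall_ne (σ⁻¹ * τ) fun x hx =>
    hne x (by rw [Perm.mul_apply, Perm.inv_eq_iff_eq] at hx; exact hx.symm)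
  set s : Perm (Fin 3) := c⁻¹ * σ⁻¹
  have hσ j : s (R (π 0) (c j)) = j := by
    simp [s, σ]
  have hτ j : s (R (π 2) (c j)) = j + 1 := by
    simpa [s, τ] using congrArg (⇑c⁻¹) (hc j)
  have hT j : T 0 j = j ∧ T 1 j = j ∧ T 2 j = j + 1 ∧ T 3 j = j + 1 := by
    fin_cases j <;> decide
  refine ⟨π, c, s, fun i j => ?_⟩
  fin_cases i
  · exact (hT j).1.trans (hσ j).symm
  · exact (hT j).2.1.trans (h01 ▸ hσ j).symm
  · exact (hT j).2.2.1.trans (hτ j).symm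
  · exact (hT j).2.2.2.trans (h23 ▸ hτ j).symm

end Transversal

/-- Up to equivalence, `T` is the unique `4 × 3` row-latin rectangle with no
transversal. -/
theorem rowLatin_no_transversal_iff_equiv_T
    (R : Fin 4 → Fin 3 → Fin 3) (hR : RowLatin R) (h : ¬ HasTransversal R) :
    RectEquiv R T := by
  have hsep : ∀ i j k, i ≠ j → j ≠ k → i ≠ k → R i = R j → ∀ x, R i x ≠ R k x :=
    fun i j k hij hjk hik hRij x hx => h (hR.hasTransversal_of_eq_of_apply_eq hij hjk hik hRij hx)
  obtain ⟨π, h01, h23⟩ := Fin.exists_perm_apply_eq_and_apply_eq R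
    (fun i j k hij hjk hik => by
      by_contra! hne
      exact h (hR.hasTransversal_of_pairwise_ne hij hjk hik hne.1 hne.2.1 hne.2.2))
    (fun i j k hij hjk hik hRij hRik => hsep i j k hij hjk hik hRij 0 (congrFun hRik 0))
  exact hR.rectEquiv_T_of_apply_eq π h01 h23
    (hsep (π 0) (π 1) (π 2) (by simp) (by simp) (by simp) h01)
end

section
/- In a doubly stochastic matrix of order $4$, every positive partial diagonal of length $2$ can be extended to a positive partial diagonal of length $3$: if $A$ is a $4 \times 4$ doubly stochastic matrix, $i_1 \neq i_2$, $j_1 \neq j_2$, $A\,i_1\,j_1 > 0$ and $A\,i_2\,j_2 > 0$, then there exist $i_3 \notin \{i_1, i_2\}$ and $j_3 \notin \{j_1, j_2\}$ with $A\,i_3\,j_3 > 0$. -/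
/-!
Let `R = {i₁, i₂}` and `C = {j₁, j₂}`. If `A` vanished on `Rᶜ × Cᶜ`, the rows of `Rᶜ` would carry
their whole mass `#Rᶜ` inside the columns of `C`, whose total mass is `#C`; so the block `R × C`
would have mass `#C - #Rᶜ = #R + #C - 4 = 0`, contradicting `A i₁ j₁ > 0`.
-/

open Finset

section DoublyStochastic

variable {ι κ α : Type*} [Fintype ι] [Fintype κ] [DecidableEq ι]

theorem sum_block_eq_card_sub_card_compl [DecidableEq κ] [AddCommGroupWithOne α] (A : ι → κ → α)
    (hrow : ∀ i, ∑ j, A i j = 1) (hcol : ∀ j, ∑ i, A i j = 1) (R : Finset ι) (C : Finset κ)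
    (hzero : ∀ i ∉ R, ∀ j ∉ C, A i j = 0) :
    ∑ i ∈ R, ∑ j ∈ C, A i j = #C - #Rᶜ := by
  have hcols : ∑ j ∈ C, ∑ i, A i j = #C := by simp [hcol]
  have hrows : ∑ i ∈ Rᶜ, ∑ j ∈ C, A i j = #Rᶜ := by
    refine (sum_congr rfl fun i hi => ?_).trans (by simp [hrow] : ∑ i ∈ Rᶜ, ∑ j, A i j = #Rᶜ)
    rw [← sum_add_sum_compl C, sum_eq_zero fun j hj => hzero i (mem_compl.1 hi) j
      (mem_compl.1 hj), add_zero]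
  rw [← hcols, ← hrows, eq_sub_iff_add_eq, sum_add_sum_compl R fun i => ∑ j ∈ C, A i j]
  exact sum_comm

theorem exists_pos_of_pos_of_card_add_card_le [CommRing α] [LinearOrder α] [IsStrictOrderedRing α]
    (A : ι → ι → α) (hnonneg : ∀ i j, 0 ≤ A i j)
    (hrow : ∀ i, ∑ j, A i j = 1) (hcol : ∀ j, ∑ i, A i j = 1) (R C : Finset ι)
    (hcard : #R + #C ≤ Fintype.card ι) {i j : ι} (hi : i ∈ R) (hj : j ∈ C) (hpos : 0 < A i j) :
    ∃ i ∉ R, ∃ j ∉ C, 0 < A i j := by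
  by_contra! hle
  have hblock := sum_block_eq_card_sub_card_compl A hrow hcol R C fun i hi j hj =>
    (hle i hi j hj).antisymm (hnonneg i j)
  have hCR : (#C : α) ≤ #Rᶜ := by
    rw [card_compl]
    exact_mod_cast Nat.le_sub_of_add_le' hcard
  have hle_sum : A i j ≤ ∑ i ∈ R, ∑ j ∈ C, A i j :=
    (single_le_sum (fun j _ => hnonneg i j) hj).trans
      (single_le_sum (f := fun i => ∑ j ∈ C, A i j)
        (fun i _ => sum_nonneg fun j _ => hnonneg i j) hi)
  linarith

end DoublyStochastic

theorem extend_positive_partial_diagonal_general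
    (A : Fin 4 → Fin 4 → ℝ)
    (hnonneg : ∀ i j, 0 ≤ A i j)
    (hrow : ∀ i, ∑ j, A i j = 1)
    (hcol : ∀ j, ∑ i, A i j = 1)
    (i₁ i₂ j₁ j₂ : Fin 4) (hi : i₁ ≠ i₂) (hj : j₁ ≠ j₂)
    (h₁ : 0 < A i₁ j₁) :
    ∃ i₃ j₃, i₃ ≠ i₁ ∧ i₃ ≠ i₂ ∧ j₃ ≠ j₁ ∧ j₃ ≠ j₂ ∧ 0 < A i₃ j₃ := by
  have hcard : #{i₁, i₂} + #{j₁, j₂} ≤ Fintype.card (Fin 4) := by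
    rw [card_pair hi, card_pair hj, Fintype.card_fin]
  obtain ⟨i₃, hi₃, j₃, hj₃, hpos⟩ := exists_pos_of_pos_of_card_add_card_le A hnonneg hrow hcol
    {i₁, i₂} {j₁, j₂} hcard (mem_insert_self i₁ {i₂}) (mem_insert_self j₁ {j₂}) h₁
  simp only [mem_insert, mem_singleton, not_or] at hi₃ hj₃
  exact ⟨i₃, j₃, hi₃.1, hi₃.2, hj₃.1, hj₃.2, hpos⟩

/-- In a doubly stochastic matrix of order 4, every positive partial diagonal of
length 2 extends to a positive partial diagonal of length 3. -/
theorem extend_positive_partial_diagonal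
    (A : Fin 4 → Fin 4 → ℝ)
    (hnonneg : ∀ i j, 0 ≤ A i j)
    (hrow : ∀ i, ∑ j, A i j = 1)
    (hcol : ∀ j, ∑ i, A i j = 1)
    (i₁ i₂ j₁ j₂ : Fin 4) (hi : i₁ ≠ i₂) (hj : j₁ ≠ j₂)
    (h₁ : 0 < A i₁ j₁) (h₂ : 0 < A i₂ j₂) :
    ∃ i₃ j₃, i₃ ≠ i₁ ∧ i₃ ≠ i₂ ∧ j₃ ≠ j₁ ∧ j₃ ≠ j₂ ∧ 0 < A i₃ j₃ :=
  extend_positive_partial_diagonal_general A hnonneg hrow hcol i₁ i₂ j₁ j₂ hi hj h₁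
end

section
/- Let $A$ be a $d$-dimensional polystochastic matrix of order $2$ with $d \geq 2$. If the permanent of $A$ equals zero, then $d$ is odd and $A$ coincides, up to permutations of hyperplanes, with the matrix $Z_2^d$ defined by $z_\alpha = 1$ if $\alpha_1 + \cdots + \alpha_d \equiv 0 \pmod 2$ and $z_\alpha = 0$ otherwise; that is, there exists $c \in \{0,1\}$ such that $a_\alpha = 1$ if $\alpha_1 + \cdots + \alpha_d \equiv c \pmod 2$ and $a_\alpha = 0$ otherwise. In particular, every $d$-dimensional polystochastic matrix of order $2$ with $d$ even has a positive permanent. -/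
/-- A multidimensional matrix is polystochastic if all entries are nonnegative
and the sum over every line (all coordinates fixed but one) equals 1. -/
def Polystochastic {d n : ℕ} (A : (Fin d → Fin n) → ℝ) : Prop :=
  (∀ α, 0 ≤ A α) ∧
    ∀ (α : Fin d → Fin n) (j : Fin d), ∑ x : Fin n, A (Function.update α j x) = 1

/-- The permanent of a `d`-dimensional matrix of order `n` (`d > 0`): the sum
over all tuples of permutations whose first component is the identity (i.e.
over all diagonals `(i, σ₂ i, …, σ_d i)`) of the products of the entries. -/
def mper {d n : ℕ} (A : (Fin d → Fin n) → ℝ) (hd : 0 < d) : ℝ :=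
  ∑ σ ∈ Finset.univ.filter
      (fun σ : Fin d → Equiv.Perm (Fin n) => σ ⟨0, hd⟩ = 1),
    ∏ i : Fin n, A (fun j => σ j i)

/-!
Each line of an order-2 polystochastic matrix consists of two entries summing to 1, so the matrix
is determined by `t = A 0`: the entry at `α` is `t` or `1 - t` according to the parity of the
coordinate sum of `α`. A diagonal of an order-2 matrix is a pair `{β, β + 1}`, and the parities
of `β` and `β + 1` differ by `d`. For even `d` both entries of every diagonal are equal, so a zero
permanent forces `t = 0` on the diagonal through `0` and `1 - t = 0` on the one through a unit
vector; for odd `d` it forces `t * (1 - t) = 0`.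
-/

open Function Finset

def parity {d : ℕ} (α : Fin d → Fin 2) : ZMod 2 :=
  ∑ j, ((α j : ℕ) : ZMod 2)

section Parity

variable {d : ℕ}

theorem parity_update (α : Fin d → Fin 2) (j : Fin d) (x : Fin 2) :
    parity (update α j x) = parity α - ((α j : ℕ) : ZMod 2) + ((x : ℕ) : ZMod 2) := by
  have h₁ := sum_update_of_mem (mem_univ j) (fun k => ((α k : ℕ) : ZMod 2)) ((x : ℕ) : ZMod 2)
  have h₂ := sum_eq_add_sum_sdiff_singleton_of_mem (mem_univ j) (fun k => ((α k : ℕ) : ZMod 2))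
  simp only [parity, apply_update (fun _ (y : Fin 2) => ((y : ℕ) : ZMod 2))]
  rw [h₁, h₂]
  ring

theorem parity_update_one (α : Fin d → Fin 2) (j : Fin d) :
    parity (update α j 1) = parity (update α j 0) + 1 := by
  simp [parity_update]

@[simp]
theorem parity_zero : parity (0 : Fin d → Fin 2) = 0 := by
  simp [parity]

theorem parity_add_one (α : Fin d → Fin 2) : parity (α + 1) = parity α + d := by
  have h : ∀ x : Fin 2, (((x + 1 : Fin 2) : ℕ) : ZMod 2) = (x : ℕ) + 1 := by decide
  simp [parity, h, sum_add_distrib]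

end Parity

theorem ZMod.two_eq_zero_or_one (p : ZMod 2) : p = 0 ∨ p = 1 := by
  revert p; decide

theorem ite_add_one_eq_one_sub_ite (p : ZMod 2) (t : ℝ) :
    (if p + 1 = 0 then t else 1 - t) = 1 - if p = 0 then t else 1 - t := by
  obtain rfl | rfl := p.two_eq_zero_or_one <;> simp [show (1 + 1 : ZMod 2) = 0 from rfl]

namespace Polystochastic

variable {d : ℕ} {A : (Fin d → Fin 2) → ℝ}

theorem apply_update_one (hA : Polystochastic A) (α : Fin d → Fin 2) (j : Fin d) :
    A (update α j 1) = 1 - A (update α j 0) := by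
  have h := hA.2 α j
  rw [Fin.sum_univ_two] at h
  linarith

theorem apply_eq_ite_parity (hA : Polystochastic A) (α : Fin d → Fin 2) :
    A α = if parity α = 0 then A 0 else 1 - A 0 := by
  suffices h : ∀ s : Finset (Fin d), ∀ α : Fin d → Fin 2, (∀ j ∉ s, α j = 0) →
      A α = if parity α = 0 then A 0 else 1 - A 0 from h univ α (by simp)
  intro s
  induction s using Finset.induction_on with
  | empty =>
    intro α hα
    obtain rfl : α = 0 := funext fun j => hα j (notMem_empty j)
    simp
  | insert a s _ ih =>
    intro α hα
    have h₀ : A (update α a 0) = if parity (update α a 0) = 0 then A 0 else 1 - A 0 := by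
      refine ih _ fun j hj => ?_
      by_cases hja : j = a
      · simp [hja]
      · simpa [hja] using hα j (by simp [hja, hj])
    have key : ∀ x : Fin 2,
        A (update α a x) = if parity (update α a x) = 0 then A 0 else 1 - A 0 := by
      rw [Fin.forall_fin_two]
      refine ⟨h₀, ?_⟩
      rw [hA.apply_update_one, h₀, parity_update_one, ite_add_one_eq_one_sub_ite]
    simpa using key (α a)

end Polystochastic

theorem prod_diagonal_eq_zero_of_mper_eq_zero {d n : ℕ} {A : (Fin d → Fin n) → ℝ}
    (hA : ∀ α, 0 ≤ A α) {hd : 0 < d} (h : mper A hd = 0)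
    {σ : Fin d → Equiv.Perm (Fin n)} (hσ : σ ⟨0, hd⟩ = 1) :
    ∏ i, A (fun j => σ j i) = 0 :=
  (sum_eq_zero_iff_of_nonneg fun _ _ => prod_nonneg fun _ _ => hA _).1 h σ (by simpa using hσ)

/-- The diagonal through `β` is given by `σ j = swap 0 (β j)`; its other entry is `β + 1`. -/
theorem apply_mul_apply_add_one_eq_zero_of_mper_eq_zero {d : ℕ} {A : (Fin d → Fin 2) → ℝ}
    (hA : ∀ α, 0 ≤ A α) {hd : 0 < d} (h : mper A hd = 0)
    (β : Fin d → Fin 2) (hβ : β ⟨0, hd⟩ = 0) :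
    A β * A (β + 1) = 0 := by
  have hswap : ∀ x : Fin 2, Equiv.swap 0 x 1 = x + 1 := by decide
  have := prod_diagonal_eq_zero_of_mper_eq_zero hA h (σ := fun j => Equiv.swap 0 (β j))
    (by simp only [hβ, Equiv.swap_self]; rfl)
  rw [Fin.prod_univ_two] at this
  simp only [Equiv.swap_apply_left, hswap] at this
  exact this

theorem exists_forall_ite_eq_ite_of_mul_one_sub_eq_zero {t : ℝ} (h : t * (1 - t) = 0) :
    ∃ c : ZMod 2, ∀ p : ZMod 2, (if p = 0 then t else 1 - t) = if p = c then 1 else 0 := by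
  rcases mul_eq_zero.1 h with h | h
  · exact ⟨1, fun p => by obtain rfl | rfl := p.two_eq_zero_or_one <;> simp [h]⟩
  · exact ⟨0, fun p => by obtain rfl | rfl := p.two_eq_zero_or_one <;> simp <;> linarith⟩

/-- A `d`-dimensional polystochastic matrix of order 2 (`d ≥ 2`) with zero
permanent exists only for odd `d`, and then it coincides, up to permutations of
hyperplanes, with the matrix `Z₂ᵈ`: its entries are 1 exactly on the indices
whose coordinate sum is congruent to a fixed `c` modulo 2. -/
theorem polystochastic_order2_perm_zero (d : ℕ) (hd : 2 ≤ d)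
    (A : (Fin d → Fin 2) → ℝ) (hA : Polystochastic A)
    (hper : mper A (by omega) = 0) :
    Odd d ∧ ∃ c : ZMod 2, ∀ α : Fin d → Fin 2,
      A α = if (∑ j : Fin d, ((α j : ℕ) : ZMod 2)) = c then 1 else 0 := by
  have hdiag := apply_mul_apply_add_one_eq_zero_of_mper_eq_zero hA.1 hper
  have h₀ := hdiag 0 rfl
  rw [hA.apply_eq_ite_parity (0 + 1), parity_add_one, parity_zero, zero_add] at h₀
  rcases Nat.even_or_odd d with hev | hodd
  · let β : Fin d → Fin 2 := update 0 ⟨1, by omega⟩ 1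
    have hβ : parity β = 1 := by simp [β, parity_update]
    have h₁ := hdiag β (by simp [β])
    rw [hA.apply_eq_ite_parity (β + 1), parity_add_one, hA.apply_eq_ite_parity β, hβ] at h₁
    simp only [ZMod.natCast_eq_zero_iff_even.2 hev, ↓reduceIte, mul_eq_zero, or_self, one_ne_zero,
      add_zero] at h₀ h₁
    linarith
  · rw [ZMod.natCast_eq_one_iff_odd.2 hodd, if_neg one_ne_zero] at h₀
    obtain ⟨c, hc⟩ := exists_forall_ite_eq_ite_of_mul_one_sub_eq_zero h₀
    exact ⟨hodd, c, fun α => (hA.apply_eq_ite_parity α).trans (hc _)⟩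
end
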